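/- Characterization of the lower cost cutoff: assume ρ > 0, condition (EXP), λ·u_r^R − (ρ+λ)·u_ℓ^R − c > 0, and λ·u_ℓ^L − (ρ+λ)·u_r^L − c > 0. Then max{V̲_own(p*), V̄_own(p*)} ≥ U^S(p*) if and only if (max{(c + ρ·u_r^R)/(λ·u_r^R − (ρ+λ)·u_ℓ^R − c), (c + ρ·u_ℓ^L)/(λ·u_ℓ^L − (ρ+λ)·u_r^L − c)})^{ρ/λ} ≥ λ/(2ρ + λ). -/

import Mathlib

/-!
At `p*` the likelihood ratio `(1 - p*) / p*` equals `(c + ρ u_r^R) / (c + ρ u_ℓ^L)`, and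
`p̲* / (1 - p̲*) = (c + ρ u_ℓ^L) / (λ u_r^R - (ρ + λ) u_ℓ^R - c)`, so the two power factors of
`V̲_own(p*)` collapse to `((c + ρ u_r^R) / (λ u_r^R - (ρ + λ) u_ℓ^R - c))^(ρ/λ)` and
`V̲_own(p*) - U^S(p*)` is a positive multiple of that power minus `λ / (2ρ + λ)`.
Exchanging the roles of the two states (`p ↦ 1 - p`) turns `V̄_own` into `V̲_own`, which gives
the same comparison for the other branch.
-/

set_option linter.unusedVariables false

noncomputable section

def Ur (urR ulR urL ulL lam rho c p : ℝ) : ℝ := p * urR + (1 - p) * urL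

def Ul (urR ulR urL ulL lam rho c p : ℝ) : ℝ := p * ulR + (1 - p) * ulL

def U (urR ulR urL ulL lam rho c p : ℝ) : ℝ :=
  max (Ur urR ulR urL ulL lam rho c p) (Ul urR ulR urL ulL lam rho c p)

/-- Stationary value `U^S(p)`. -/
def US (urR ulR urL ulL lam rho c p : ℝ) : ℝ :=
  (lam * (p * urR + (1 - p) * ulL) - 2 * c) / (2 * rho + lam)

/-- Full-attention value `U^FA(p)`. -/
def UFA (urR ulR urL ulL lam rho c p : ℝ) : ℝ :=
  (lam * (p * urR + (1 - p) * ulL) - c) / (rho + lam)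

/-- Lower boundary of the experimentation region. -/
def plowStar (urR ulR urL ulL lam rho c : ℝ) : ℝ :=
  (ulL * rho + c) / (rho * (ulL - ulR) + (urR - ulR) * lam)

/-- Upper boundary of the experimentation region. -/
def phighStar (urR ulR urL ulL lam rho c : ℝ) : ℝ :=
  ((ulL - urL) * lam - urL * rho - c) / (rho * (urR - urL) + (ulL - urL) * lam)

/-- The absorbing belief `p*`. -/
def pstar (urR ulR urL ulL lam rho c : ℝ) : ℝ :=
  (ulL * rho + c) / ((urR * rho + c) + (ulL * rho + c))

/-- The belief at which `U_r` and `U_ℓ` cross. -/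
def phat (urR ulR urL ulL lam rho c : ℝ) : ℝ :=
  (ulL - urL) / ((urR - ulR) + (ulL - urL))

/-- Left branch of the own-biased value (for `ρ > 0`). -/
def Vlown (urR ulR urL ulL lam rho c p : ℝ) : ℝ :=
  -(c / rho) * (1 - p) + ((urR * lam - c) / (lam + rho)) * p
    + (lam * (c + ulL * rho) / (rho * (lam + rho)))
      * (plowStar urR ulR urL ulL lam rho c
          / (1 - plowStar urR ulR urL ulL lam rho c)) ^ (rho / lam)
      * ((1 - p) / p) ^ (rho / lam) * (1 - p)

/-- Right branch of the own-biased value (for `ρ > 0`). -/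
def Vhown (urR ulR urL ulL lam rho c p : ℝ) : ℝ :=
  -(c / rho) * p + ((ulL * lam - c) / (lam + rho)) * (1 - p)
    + (lam * (c + urR * rho) / (rho * (lam + rho)))
      * ((1 - phighStar urR ulR urL ulL lam rho c)
          / phighStar urR ulR urL ulL lam rho c) ^ (rho / lam)
      * (p / (1 - p)) ^ (rho / lam) * p

lemma div_one_sub_of_eq_div_add {p x y : ℝ} (hp : p = y / (x + y)) (hxy : x + y ≠ 0) :
    p / (1 - p) = y / x := by
  have : 1 - p = x / (x + y) := by rw [hp]; field_simp; ring
  rw [this, hp, div_div_div_cancel_right₀ hxy]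

section

variable (urR ulR urL ulL lam rho c : ℝ)

lemma one_sub_phighStar_div :
    (1 - phighStar urR ulR urL ulL lam rho c) / phighStar urR ulR urL ulL lam rho c
      = plowStar ulL urL ulR urR lam rho c / (1 - plowStar ulL urL ulR urR lam rho c) := by
  unfold phighStar plowStar
  rcases eq_or_ne (rho * (urR - urL) + (ulL - urL) * lam) 0 with hD | hD
  · simp [hD] -- both sides are `x / 0 = 0`
  · field_simp
    ring_nf

lemma Vhown_eq_Vlown_swap (p : ℝ) :
    Vhown urR ulR urL ulL lam rho c p = Vlown ulL urL ulR urR lam rho c (1 - p) := by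
  rw [Vhown, Vlown, one_sub_phighStar_div, sub_sub_cancel]

lemma US_swap (p : ℝ) :
    US urR ulR urL ulL lam rho c p = US ulL urL ulR urR lam rho c (1 - p) := by
  simp only [US, sub_sub_cancel]
  ring_nf

lemma pstar_swap (h : (urR * rho + c) + (ulL * rho + c) ≠ 0) :
    pstar ulL urL ulR urR lam rho c = 1 - pstar urR ulR urL ulL lam rho c := by
  rw [pstar, pstar, add_comm (ulL * rho + c), eq_sub_iff_add_eq, ← add_div, div_self h]

lemma Vlown_pstar_eq (hlam : 0 < lam) (hrho : 0 < rho)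
    (hA : 0 < c + rho * urR) (hB : 0 < c + rho * ulL)
    (hK : 0 < lam * urR - (rho + lam) * ulR - c) :
    Vlown urR ulR urL ulL lam rho c (pstar urR ulR urL ulL lam rho c)
      = US urR ulR urL ulL lam rho c (pstar urR ulR urL ulL lam rho c)
        + lam * (c + rho * urR) * (c + rho * ulL)
            / (rho * (lam + rho) * ((c + rho * urR) + (c + rho * ulL)))
          * (((c + rho * urR) / (lam * urR - (rho + lam) * ulR - c)) ^ (rho / lam)
            - lam / (2 * rho + lam)) := by
  set A := c + rho * urR
  set B := c + rho * ulL
  set K := lam * urR - (rho + lam) * ulR - c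
  have hp : pstar urR ulR urL ulL lam rho c = B / (A + B) := by
    rw [pstar]
    congr 1 <;> ring
  have hp_ratio : (1 - pstar urR ulR urL ulL lam rho c) / pstar urR ulR urL ulL lam rho c
      = A / B := by
    have := div_one_sub_of_eq_div_add (p := 1 - pstar urR ulR urL ulL lam rho c) (x := B)
      (y := A) (by rw [hp]; field_simp; ring) (by positivity)
    rwa [sub_sub_cancel] at this
  have hplow_ratio : plowStar urR ulR urL ulL lam rho c
      / (1 - plowStar urR ulR urL ulL lam rho c) = B / K :=
    div_one_sub_of_eq_div_add (by rw [plowStar]; congr 1 <;> ring) (by positivity)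
  have hT : (B / K) ^ (rho / lam) * (A / B) ^ (rho / lam) = (A / K) ^ (rho / lam) := by
    rw [← Real.mul_rpow (by positivity) (by positivity)]
    congr 1
    field_simp
  rw [Vlown, hplow_ratio, hp_ratio, mul_assoc (lam * (c + ulL * rho) / (rho * (lam + rho))), hT,
    US, hp]
  generalize (A / K) ^ (rho / lam) = T
  field_simp
  ring

lemma US_le_Vlown_pstar_iff (hlam : 0 < lam) (hrho : 0 < rho)
    (hA : 0 < c + rho * urR) (hB : 0 < c + rho * ulL)
    (hK : 0 < lam * urR - (rho + lam) * ulR - c) :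
    US urR ulR urL ulL lam rho c (pstar urR ulR urL ulL lam rho c)
        ≤ Vlown urR ulR urL ulL lam rho c (pstar urR ulR urL ulL lam rho c)
      ↔ lam / (2 * rho + lam)
        ≤ ((c + rho * urR) / (lam * urR - (rho + lam) * ulR - c)) ^ (rho / lam) := by
  rw [Vlown_pstar_eq urR ulR urL ulL lam rho c hlam hrho hA hB hK, le_add_iff_nonneg_right,
    mul_nonneg_iff_of_pos_left (by positivity), sub_nonneg]

lemma US_le_Vhown_pstar_iff (hlam : 0 < lam) (hrho : 0 < rho)
    (hA : 0 < c + rho * urR) (hB : 0 < c + rho * ulL)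
    (hK : 0 < lam * ulL - (rho + lam) * urL - c) :
    US urR ulR urL ulL lam rho c (pstar urR ulR urL ulL lam rho c)
        ≤ Vhown urR ulR urL ulL lam rho c (pstar urR ulR urL ulL lam rho c)
      ↔ lam / (2 * rho + lam)
        ≤ ((c + rho * ulL) / (lam * ulL - (rho + lam) * urL - c)) ^ (rho / lam) := by
  rw [Vhown_eq_Vlown_swap, US_swap, ← pstar_swap _ _ _ _ _ _ _ (by linarith : (0 : ℝ) < _).ne']
  exact US_le_Vlown_pstar_iff ulL urL ulR urR lam rho c hlam hrho hB hA hK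

end

theorem lower_cutoff_characterization_general
    (urR ulR urL ulL lam rho c : ℝ)
    (h_urR : urR > max 0 ulR) (h_ulL : ulL > max 0 urL)
    (h_lam : 0 < lam) (h_rho : 0 < rho) (h_c : 0 ≤ c)
    (h_pos1 : 0 < lam * urR - (rho + lam) * ulR - c)
    (h_pos2 : 0 < lam * ulL - (rho + lam) * urL - c) :
    max (Vlown urR ulR urL ulL lam rho c (pstar urR ulR urL ulL lam rho c))
        (Vhown urR ulR urL ulL lam rho c (pstar urR ulR urL ulL lam rho c))
      ≥ US urR ulR urL ulL lam rho c (pstar urR ulR urL ulL lam rho c)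
    ↔ (max ((c + rho * urR) / (lam * urR - (rho + lam) * ulR - c))
          ((c + rho * ulL) / (lam * ulL - (rho + lam) * urL - c))) ^ (rho / lam)
        ≥ lam / (2 * rho + lam) := by
  have hA : 0 < c + rho * urR := by
    have := (le_max_left 0 ulR).trans_lt h_urR
    positivity
  have hB : 0 < c + rho * ulL := by
    have := (le_max_left 0 urL).trans_lt h_ulL
    positivity
  rw [ge_iff_le, le_max_iff,
    US_le_Vlown_pstar_iff urR ulR urL ulL lam rho c h_lam h_rho hA hB h_pos1,
    US_le_Vhown_pstar_iff urR ulR urL ulL lam rho c h_lam h_rho hA hB h_pos2,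
    ge_iff_le, Real.rpow_max (by positivity) (by positivity) (by positivity), le_max_iff]

/-- Characterization of the lower cost cutoff via the comparison of the own-biased value
and the stationary value at the absorbing belief `p*`. -/
theorem lower_cutoff_characterization
    (urR ulR urL ulL lam rho c : ℝ)
    (h_urR : urR > max 0 ulR) (h_ulL : ulL > max 0 urL)
    (h_lam : 0 < lam) (h_rho : 0 < rho) (h_c : 0 ≤ c)
    (h_EXP : UFA urR ulR urL ulL lam rho c (phat urR ulR urL ulL lam rho c)
      > U urR ulR urL ulL lam rho c (phat urR ulR urL ulL lam rho c))
    (h_pos1 : 0 < lam * urR - (rho + lam) * ulR - c)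
    (h_pos2 : 0 < lam * ulL - (rho + lam) * urL - c) :
    max (Vlown urR ulR urL ulL lam rho c (pstar urR ulR urL ulL lam rho c))
        (Vhown urR ulR urL ulL lam rho c (pstar urR ulR urL ulL lam rho c))
      ≥ US urR ulR urL ulL lam rho c (pstar urR ulR urL ulL lam rho c)
    ↔ (max ((c + rho * urR) / (lam * urR - (rho + lam) * ulR - c))
          ((c + rho * ulL) / (lam * ulL - (rho + lam) * urL - c))) ^ (rho / lam)
        ≥ lam / (2 * rho + lam) :=
  lower_cutoff_characterization_general urR ulR urL ulL lam rho c h_urR h_ulL h_lam h_rho h_c h_pos1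
    h_pos2
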